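/- Let (T, s) be a 2-coloured (signed) triangulation of a convex polygon with associated proper 4-colouring of the vertices, and let x be a vertex of the polygon. If the only two neighbours of x with equal colour are its two neighbours along the polygon boundary, then x has degree 3 or 4 in T and the weight p(x) (sum mod 3 of the signs of triangles at x) equals 0. -/

import Mathlib

namespace PolyFlip


/-- Two vertices of the convex `N`-gon are consecutive along the boundary. -/
def BdryAdj (N : ℕ) (i j : Fin N) : Prop :=
  (i.val + 1) % N = j.val ∨ (j.val + 1) % N = i.val

/-- `d` is a diagonal of the convex `N`-gon: an unordered pair of distinct,
non-consecutive vertices. -/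
def IsDiag (N : ℕ) (d : Finset (Fin N)) : Prop :=
  ∃ i j : Fin N, i ≠ j ∧ ¬ BdryAdj N i j ∧ d = {i, j}

/-- The chord `d` crosses the chord `e` (in this orientation): the endpoints
interlace in the cyclic (here: linear) order of the polygon's vertices. -/
def Crosses {N : ℕ} (d e : Finset (Fin N)) : Prop :=
  ∃ a b c f : Fin N, d = {a, b} ∧ e = {c, f} ∧ a < c ∧ c < b ∧ b < f

/-- A triangulation of the convex `N`-gon: a maximal set of pairwise
non-crossing diagonals. -/
structure Triangulation (N : ℕ) where
  diags : Finset (Finset (Fin N))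
  isDiag : ∀ d ∈ diags, IsDiag N d
  noncross : ∀ d ∈ diags, ∀ e ∈ diags, ¬ Crosses d e
  maximal : ∀ d, IsDiag N d → (∀ e ∈ diags, ¬ Crosses d e ∧ ¬ Crosses e d) → d ∈ diags

/-- `a` and `b` are joined by an edge of the triangulated polygon:
either a boundary edge, or a diagonal of the triangulation. -/
def IsEdge {N : ℕ} (T : Triangulation N) (a b : Fin N) : Prop :=
  a ≠ b ∧ (BdryAdj N a b ∨ ({a, b} : Finset (Fin N)) ∈ T.diags)

/-- `t` is a triangle (face) of the triangulation `T`. -/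
def IsTriangle {N : ℕ} (T : Triangulation N) (t : Finset (Fin N)) : Prop :=
  ∃ a b c : Fin N, a ≠ b ∧ a ≠ c ∧ b ≠ c ∧ t = {a, b, c} ∧
    IsEdge T a b ∧ IsEdge T a c ∧ IsEdge T b c

/-- A coloured triangulation: a triangulation together with a colour in
`Fin m` for each of its triangles. -/
structure ColouredTri (N m : ℕ) where
  T : Triangulation N
  col : {t : Finset (Fin N) // IsTriangle T t} → Fin m

/-- The degree of a vertex `x` in the triangulated polygon. -/
noncomputable def degree {N : ℕ} (T : Triangulation N) (x : Fin N) : ℕ :=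
  Nat.card {y : Fin N // IsEdge T x y}

/-- The `σ`-flip at the diagonal `d`: `d = {a,b}` is a diagonal of `C` whose two
incident triangles `{a,b,x}` and `{a,b,y}` have the same colour `i`; it is replaced by
the other diagonal `{x,y}` of the quadrilateral, the two new triangles `{a,x,y}` and
`{b,x,y}` get colour `σ i`, and all other triangles keep their colours. -/
def SFlipAt {N m : ℕ} (σ : Equiv.Perm (Fin m)) (d : Finset (Fin N))
    (C C' : ColouredTri N m) : Prop :=
  ∃ (a b x y : Fin N) (h₁ : IsTriangle C.T {a, b, x}) (h₂ : IsTriangle C.T {a, b, y})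
    (h₁' : IsTriangle C'.T {a, x, y}) (h₂' : IsTriangle C'.T {b, x, y}),
    d = {a, b} ∧ d ∈ C.T.diags ∧ x ≠ y ∧
    C.col ⟨{a, b, x}, h₁⟩ = C.col ⟨{a, b, y}, h₂⟩ ∧
    C'.T.diags = insert {x, y} (C.T.diags.erase d) ∧
    C'.col ⟨{a, x, y}, h₁'⟩ = σ (C.col ⟨{a, b, x}, h₁⟩) ∧
    C'.col ⟨{b, x, y}, h₂'⟩ = σ (C.col ⟨{a, b, x}, h₁⟩) ∧
    ∀ (t : Finset (Fin N)) (ht : IsTriangle C.T t) (ht' : IsTriangle C'.T t),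
      t ≠ {a, b, x} → t ≠ {a, b, y} → C'.col ⟨t, ht'⟩ = C.col ⟨t, ht⟩

/-- The `σ`-flip relation. -/
def SFlip {N m : ℕ} (σ : Equiv.Perm (Fin m)) (C C' : ColouredTri N m) : Prop :=
  ∃ d, SFlipAt σ d C C'

/-- The 2-coloured flip at a diagonal (the colour permutation swaps the two colours). -/
abbrev Flip2At {N : ℕ} (d : Finset (Fin N)) (C C' : ColouredTri N 2) : Prop :=
  SFlipAt (finRotate 2) d C C'

/-- The 2-coloured flip relation. -/
abbrev Flip2 {N : ℕ} (C C' : ColouredTri N 2) : Prop :=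
  SFlip (finRotate 2) C C'

/-- The 2-coloured flip graph of the convex `N`-gon: vertices are the 2-coloured
triangulations, edges are single 2-coloured flips. -/
def flipGraph (N : ℕ) : SimpleGraph (ColouredTri N 2) where
  Adj C C' := C ≠ C' ∧ (Flip2 C C' ∨ Flip2 C' C)
  symm := ⟨fun C C' h => ⟨h.1.symm, h.2.symm⟩⟩
  loopless := ⟨fun C h => h.1 rfl⟩

/-- The sign (`+1` for colour `0`, `-1` for colour `1`) of a colour, in `ZMod 3`. -/
def signVal (c : Fin 2) : ZMod 3 := if c = 0 then 1 else -1

/-- The weight of a vertex `x`: the sum, modulo 3, of the signs of all triangles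
incident with `x`. -/
noncomputable def weight {N : ℕ} (C : ColouredTri N 2) (x : Fin N) : ZMod 3 :=
  ∑ᶠ t : {t : Finset (Fin N) // IsTriangle C.T t},
    if x ∈ t.val then signVal (C.col t) else 0

/-- The number of triangles coloured `+1` (colour `0`). -/
noncomputable def plusCount {N : ℕ} (C : ColouredTri N 2) : ℕ :=
  Nat.card {t : {t : Finset (Fin N) // IsTriangle C.T t} // C.col t = 0}

/-- Adjacency in the `k`-dimensional hypercube: the two vertices differ in
exactly one coordinate. -/
def cubeAdj (k : ℕ) (u v : Fin k → Bool) : Prop := ∃! i, u i ≠ v i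

/-- The `k`-dimensional hypercube graph on `{0,1}^k`. -/
def cubeGraph (k : ℕ) : SimpleGraph (Fin k → Bool) where
  Adj := cubeAdj k
  symm := by
    constructor
    rintro u v ⟨i, hi, hu⟩
    exact ⟨i, hi.symm, fun j hj => hu j hj.symm⟩
  loopless := by
    constructor
    rintro u ⟨i, hi, -⟩
    exact hi rfl

/-- `f` exhibits a `k`-dimensional hypercube inside the connected component of `C`
in the 2-coloured flip graph. -/
def CubeEmb {N : ℕ} (C : ColouredTri N 2) (k : ℕ)
    (f : (Fin k → Bool) → ColouredTri N 2) : Prop :=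
  Function.Injective f ∧
  (∀ u v, cubeAdj k u v → (flipGraph N).Adj (f u) (f v)) ∧
  ∀ u, (flipGraph N).Reachable C (f u)

/-- `G` contains a subdivision (topological copy) of `H`: there are branch vertices
`f w` for the vertices `w` of `H` and internally disjoint paths in `G` between them
realising the edges of `H`. -/
def ContainsSubdivision {V W : Type*} (G : SimpleGraph V) (H : SimpleGraph W) : Prop :=
  ∃ f : W → V, Function.Injective f ∧
    ∃ P : ∀ u v : W, H.Adj u v → G.Walk (f u) (f v),
      (∀ u v (h : H.Adj u v), (P u v h).IsPath) ∧
      (∀ u v (h : H.Adj u v) (w : W), f w ∈ (P u v h).support → w = u ∨ w = v) ∧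
      (∀ u₁ v₁ (h₁ : H.Adj u₁ v₁) u₂ v₂ (h₂ : H.Adj u₂ v₂),
        (s(u₁, v₁) : Sym2 W) ≠ s(u₂, v₂) →
        ∀ x, x ∈ (P u₁ v₁ h₁).support → x ∈ (P u₂ v₂ h₂).support →
          (x = f u₁ ∨ x = f v₁) ∧ (x = f u₂ ∨ x = f v₂))

/-- Planarity, via Kuratowski's characterisation: a graph is planar iff it contains
no subdivision of `K₅` and no subdivision of `K₃,₃`. -/
def IsPlanar {V : Type*} (G : SimpleGraph V) : Prop :=
  ¬ ContainsSubdivision G (SimpleGraph.completeGraph (Fin 5)) ∧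
  ¬ ContainsSubdivision G (completeBipartiteGraph (Fin 3) (Fin 3))

/-- `col` is a proper 4-colouring of the vertices associated to the signed
triangulation `C`: adjacent vertices get distinct colours, and in every
quadrilateral formed by two triangles sharing a diagonal, the two vertices not on
the diagonal have equal colours iff the two triangles have different signs. -/
def Compatible {N : ℕ} (C : ColouredTri N 2) (col : Fin N → Fin 4) : Prop :=
  (∀ a b : Fin N, IsEdge C.T a b → col a ≠ col b) ∧
  ∀ (a b x z : Fin N) (h₁ : IsTriangle C.T {a, b, x}) (h₂ : IsTriangle C.T {a, b, z}),
    x ≠ z → ({a, b} : Finset (Fin N)) ∈ C.T.diags →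
    (col x = col z ↔ C.col ⟨{a, b, x}, h₁⟩ ≠ C.col ⟨{a, b, z}, h₂⟩)

/-!
Rotate the polygon so that `x` becomes the vertex `0`. The linear order of `Fin (n + 3)` then
lists the neighbours of `x` in the order in which they surround it,
`1 = s₀ < s₁ < ⋯ < s_k = -1`, and the triangles at `x` form the fan `{0, sᵢ, sᵢ₊₁}`.
The neighbours other than `-1` carry pairwise distinct colours, all different from `col 0`, so
`k + 1 ≤ 4`; and `k ≠ 1`, since otherwise the two boundary neighbours, which share a colour,
would be adjacent. Consecutive fan triangles share the diagonal `{0, sᵢ}`, so their signs differ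
exactly when `col sᵢ₋₁ = col sᵢ₊₁`. For `k = 2` this is the case (`s₀` and `s₂` are the
boundary neighbours), and the weight is `1 - 1 = 0`; for `k = 3` it never is, so the three signs
agree and the weight is `3 · (±1) = 0` in `ZMod 3`.
-/

open Finset Pointwise

lemma eq_and_eq_of_pair_eq_pair_of_lt {α : Type*} [LinearOrder α] {a b c d : α}
    (h : ({a, b} : Finset α) = {c, d}) (hab : a < b) (hcd : c < d) : a = c ∧ b = d := by
  have hset := congrArg ((↑) : Finset α → Set α) h
  push_cast at hset
  rcases Set.pair_eq_pair_iff.1 hset with h' | ⟨rfl, rfl⟩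
  · exact h'
  · exact absurd (hab.trans hcd) (lt_irrefl _)

lemma signVal_add_signVal_of_ne {c c' : Fin 2} (h : c ≠ c') : signVal c + signVal c' = 0 := by
  fin_cases c <;> fin_cases c' <;> first | exact absurd rfl h | decide

lemma signVal_add_signVal_add_signVal (c : Fin 2) : signVal c + signVal c + signVal c = 0 := by
  fin_cases c <;> decide

section Edges

variable {N : ℕ} {T : Triangulation N} {a b c f u v x y : Fin N}

lemma bdryAdj_iff_val {i j : Fin N} :
    BdryAdj N i j ↔ j.val = i.val + 1 ∨ i.val = j.val + 1 ∨
      (i.val + 1 = N ∧ j.val = 0) ∨ (j.val + 1 = N ∧ i.val = 0) := by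
  have hi := i.isLt
  have hj := j.isLt
  have mod_eq : ∀ k < N, (k + 1) % N = if k + 1 = N then 0 else k + 1 := by
    intro k hk
    split_ifs with h
    · rw [h, Nat.mod_self]
    · exact Nat.mod_eq_of_lt (by omega)
  rw [BdryAdj, mod_eq _ hi, mod_eq _ hj]
  split_ifs <;> omega

lemma IsEdge.symm (h : IsEdge T a b) : IsEdge T b a :=
  ⟨h.1.symm, h.2.imp Or.symm (by rw [pair_comm]; exact id)⟩

lemma IsEdge.not_interlace (h₁ : IsEdge T a b) (h₂ : IsEdge T c f) :
    ¬ (a < c ∧ c < b ∧ b < f) := by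
  rintro ⟨hac, hcb, hbf⟩
  have := f.isLt
  rcases h₁.2 with hb | hd
  · rw [bdryAdj_iff_val] at hb
    rw [Fin.lt_def] at hac hcb hbf
    omega
  rcases h₂.2 with hb | hd'
  · rw [bdryAdj_iff_val] at hb
    rw [Fin.lt_def] at hac hcb hbf
    omega
  exact T.noncross _ hd _ hd' ⟨a, b, c, f, rfl, rfl, hac, hcb, hbf⟩

lemma exists_interlace_of_not_isEdge (hab : a < b) (h : ¬ IsEdge T a b) :
    ∃ c f, IsEdge T c f ∧ ((a < c ∧ c < b ∧ b < f) ∨ (c < a ∧ a < f ∧ f < b)) := by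
  have hdiag : IsDiag N {a, b} := ⟨a, b, hab.ne, fun hb => h ⟨hab.ne, Or.inl hb⟩, rfl⟩
  obtain ⟨e, he, hcr⟩ : ∃ e ∈ T.diags, Crosses {a, b} e ∨ Crosses e {a, b} := by
    by_contra! hno
    exact h ⟨hab.ne, Or.inr (T.maximal _ hdiag hno)⟩
  rcases hcr with ⟨a', b', c, f, hd, rfl, h₁, h₂, h₃⟩ |
    ⟨c, f, a', b', rfl, hd, h₁, h₂, h₃⟩
  · obtain ⟨rfl, rfl⟩ := eq_and_eq_of_pair_eq_pair_of_lt hd hab (h₁.trans h₂)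
    exact ⟨c, f, ⟨(h₂.trans h₃).ne, Or.inr he⟩, Or.inl ⟨h₁, h₂, h₃⟩⟩
  · obtain ⟨rfl, rfl⟩ := eq_and_eq_of_pair_eq_pair_of_lt hd hab (h₂.trans h₃)
    exact ⟨c, f, ⟨(h₁.trans h₂).ne, Or.inr he⟩, Or.inr ⟨h₁, h₂, h₃⟩⟩

/-- The witness `c` is the largest vertex of `(u, v)` adjacent to `u`: an edge crossing `cv`
would cross `uv` or `uc`, or be a further such neighbour of `u`. -/
lemma IsEdge.exists_between (huv : IsEdge T u v) (h : u.val + 1 < v.val) :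
    ∃ c, u < c ∧ c < v ∧ IsEdge T u c ∧ IsEdge T c v := by
  classical
  let F := univ.filter fun c => u < c ∧ c < v ∧ IsEdge T u c
  have hF : F.Nonempty := by
    refine ⟨⟨u.val + 1, by omega⟩, mem_filter.2 ⟨mem_univ _, ?_, ?_, ?_⟩⟩
    · rw [Fin.lt_def]; simp
    · rw [Fin.lt_def]; simpa using h
    · exact ⟨by simp [Fin.ext_iff], Or.inl (bdryAdj_iff_val.2 (Or.inl rfl))⟩
  obtain ⟨-, huc, hcv, huc'⟩ := mem_filter.1 (F.max'_mem hF)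
  refine ⟨F.max' hF, huc, hcv, huc', ?_⟩
  by_contra hnot
  obtain ⟨p, q, hpq, ⟨h₁, h₂, h₃⟩ | ⟨h₁, h₂, h₃⟩⟩ :=
    exists_interlace_of_not_isEdge hcv hnot
  · exact huv.not_interlace hpq ⟨huc.trans h₁, h₂, h₃⟩
  rcases lt_trichotomy p u with hpu | rfl | hup
  · exact hpq.not_interlace huv ⟨hpu, huc.trans h₂, h₃⟩
  · exact (F.le_max' q (mem_filter.2 ⟨mem_univ _, huc.trans h₂, h₃, hpq⟩)).not_gt h₂
  · exact huc'.not_interlace hpq ⟨hup, h₁, h₂⟩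

lemma IsTriangle.exists_eq_insert {t : Finset (Fin N)} (ht : IsTriangle T t) (hx : x ∈ t) :
    ∃ p q, IsEdge T x p ∧ IsEdge T x q ∧ IsEdge T p q ∧ t = {x, p, q} := by
  obtain ⟨a, b, c, -, -, -, rfl, hab, hac, hbc⟩ := ht
  simp only [mem_insert, mem_singleton] at hx
  rcases hx with rfl | rfl | rfl
  · exact ⟨b, c, hab, hac, hbc, rfl⟩
  · exact ⟨a, c, hab.symm, hbc, hac, insert_comm _ _ _⟩
  · exact ⟨a, b, hac.symm, hbc.symm, hab, by rw [pair_comm, insert_comm]⟩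

lemma IsTriangle.image {T' : Triangulation N} {g : Fin N → Fin N}
    (hg : ∀ i j, IsEdge T' (g i) (g j) ↔ IsEdge T i j) {t : Finset (Fin N)}
    (h : IsTriangle T t) : IsTriangle T' (t.image g) := by
  classical
  obtain ⟨a, b, c, -, -, -, rfl, hab, hac, hbc⟩ := h
  rw [← hg] at hab hac hbc
  exact ⟨g a, g b, g c, hab.1, hac.1, hbc.1, by simp [image_insert], hab, hac, hbc⟩

open Classical in
noncomputable def Triangulation.neighborFinset (T : Triangulation N) (x : Fin N) :
    Finset (Fin N) :=
  univ.filter (IsEdge T x)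

lemma Triangulation.mem_neighborFinset : y ∈ T.neighborFinset x ↔ IsEdge T x y := by
  simp [neighborFinset]

lemma degree_eq_card_neighborFinset : degree T x = (T.neighborFinset x).card := by
  classical
  rw [degree, Nat.card_eq_fintype_card, Fintype.card_subtype, Triangulation.neighborFinset]

lemma card_neighborFinset_le_four {col : Fin N → Fin 4}
    (hproper : ∀ a b, IsEdge T a b → col a ≠ col b)
    (honly : ∀ y z, y ≠ z → IsEdge T x y → IsEdge T x z → col y = col z →
      ({y, z} : Finset (Fin N)) = {u, v}) :
    (T.neighborFinset x).card ≤ 4 := by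
  classical
  have hmaps : Set.MapsTo col ((T.neighborFinset x).erase u) (univ.erase (col x)) := by
    intro y hy
    simpa [eq_comm] using hproper _ _ (T.mem_neighborFinset.1 (mem_of_mem_erase hy))
  have hinj : Set.InjOn col ((T.neighborFinset x).erase u) := by
    intro y hy z hz hyz
    by_contra hne
    simp only [coe_erase, Set.mem_sdiff, mem_coe, Triangulation.mem_neighborFinset,
      Set.mem_singleton_iff] at hy hz
    have hu : u ∈ ({y, z} : Finset (Fin N)) := by
      rw [honly y z hne hy.1 hz.1 hyz]
      exact mem_insert_self _ _
    simp only [mem_insert, mem_singleton] at hu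
    rcases hu with rfl | rfl
    exacts [hy.2 rfl, hz.2 rfl]
  have h3 := card_le_card_of_injOn col hmaps hinj
  rw [card_erase_of_mem (mem_univ _), card_univ, Fintype.card_fin] at h3
  have := pred_card_le_card_erase (s := T.neighborFinset x) (a := u)
  omega

lemma Compatible.col_eq_iff {C : ColouredTri N 2} {col : Fin N → Fin 4} (h : Compatible C col)
    (t₁ t₂ : {t // IsTriangle C.T t}) (h₁ : t₁.1 = {a, b, x}) (h₂ : t₂.1 = {a, b, y})
    (hxy : x ≠ y) (hab : ({a, b} : Finset (Fin N)) ∈ C.T.diags) :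
    col x = col y ↔ C.col t₁ ≠ C.col t₂ := by
  obtain ⟨t₁, ht₁⟩ := t₁
  obtain ⟨t₂, ht₂⟩ := t₂
  dsimp only at h₁ h₂
  subst h₁ h₂
  exact h.2 a b x y ht₁ ht₂ hxy hab

end Edges

section Rotation

variable {n m : ℕ}

lemma bdryAdj_iff_eq_add_one {i j : Fin (n + 3)} :
    BdryAdj (n + 3) i j ↔ j = i + 1 ∨ i = j + 1 := by
  have := i.isLt
  have := j.isLt
  rw [bdryAdj_iff_val]
  simp only [Fin.ext_iff, Fin.val_add_one, Fin.val_last]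
  split_ifs <;> omega

lemma bdryAdj_add_left {a i j : Fin (n + 3)} :
    BdryAdj (n + 3) (a + i) (a + j) ↔ BdryAdj (n + 3) i j := by
  simp only [bdryAdj_iff_eq_add_one, add_assoc, add_right_inj]

/-- A chord ending at the last vertex wraps around to `0`, which swaps the roles of the chords. -/
lemma crosses_one_vadd {d e : Finset (Fin (n + 3))} (h : Crosses d e) :
    Crosses ((1 : Fin (n + 3)) +ᵥ d) ((1 : Fin (n + 3)) +ᵥ e) ∨
      Crosses ((1 : Fin (n + 3)) +ᵥ e) ((1 : Fin (n + 3)) +ᵥ d) := by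
  obtain ⟨a, b, c, f, rfl, rfl, hac, hcb, hbf⟩ := h
  simp only [vadd_finset_insert, vadd_finset_singleton, vadd_eq_add]
  simp only [add_comm (1 : Fin (n + 3))]
  have hf := f.isLt
  rw [Fin.lt_def] at hac hcb hbf
  by_cases hlast : f.val = n + 2
  · refine Or.inr ⟨f + 1, c + 1, a + 1, b + 1, pair_comm _ _, rfl, ?_, ?_, ?_⟩ <;>
      simp only [Fin.lt_def, Fin.val_add_one, Fin.ext_iff, Fin.val_last] <;> split_ifs <;> omega
  · refine Or.inl ⟨a + 1, b + 1, c + 1, f + 1, rfl, rfl, ?_, ?_, ?_⟩ <;>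
      simp only [Fin.lt_def, Fin.val_add_one, Fin.ext_iff, Fin.val_last] <;> split_ifs <;> omega

lemma crosses_vadd (a : Fin (n + 3)) {d e : Finset (Fin (n + 3))}
    (h : Crosses d e ∨ Crosses e d) :
    Crosses (a +ᵥ d) (a +ᵥ e) ∨ Crosses (a +ᵥ e) (a +ᵥ d) := by
  induction a using Fin.induction with
  | zero => simpa using h
  | succ i ih =>
    rw [Fin.coeSucc_eq_succ.symm.trans (add_comm _ _), ← vadd_vadd, ← vadd_vadd]
    rcases ih with h' | h'
    · exact crosses_one_vadd h'
    · exact (crosses_one_vadd h').symm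

lemma crosses_vadd_iff (a : Fin (n + 3)) {d e : Finset (Fin (n + 3))} :
    (Crosses (a +ᵥ d) (a +ᵥ e) ∨ Crosses (a +ᵥ e) (a +ᵥ d)) ↔
      (Crosses d e ∨ Crosses e d) :=
  ⟨fun h => by simpa using crosses_vadd (-a) h, crosses_vadd a⟩

lemma isDiag_vadd (a : Fin (n + 3)) {d : Finset (Fin (n + 3))} (h : IsDiag (n + 3) d) :
    IsDiag (n + 3) (a +ᵥ d) := by
  obtain ⟨i, j, hij, hb, rfl⟩ := h
  exact ⟨a + i, a + j, by simpa using hij, by rwa [bdryAdj_add_left],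
    by simp [vadd_finset_insert]⟩

def Triangulation.rotate (T : Triangulation (n + 3)) (a : Fin (n + 3)) :
    Triangulation (n + 3) where
  diags := T.diags.image (a +ᵥ ·)
  isDiag := by
    simp only [mem_image]
    rintro _ ⟨d, hd, rfl⟩
    exact isDiag_vadd a (T.isDiag d hd)
  noncross := by
    simp only [mem_image]
    rintro _ ⟨d, hd, rfl⟩ _ ⟨e, he, rfl⟩ h
    rcases (crosses_vadd_iff a).1 (Or.inl h) with h | h
    exacts [T.noncross d hd e he h, T.noncross e he d hd h]
  maximal := by
    intro d hd hno
    refine mem_image.2 ⟨-a +ᵥ d, T.maximal _ (isDiag_vadd _ hd) fun e he => ?_, by simp⟩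
    have := hno (a +ᵥ e) (mem_image_of_mem _ he)
    rw [← not_or] at this ⊢
    rw [← crosses_vadd_iff a]
    simpa using this

variable {T : Triangulation (n + 3)} {a : Fin (n + 3)}

lemma mem_rotate_diags {d : Finset (Fin (n + 3))} :
    d ∈ (T.rotate a).diags ↔ -a +ᵥ d ∈ T.diags := by
  refine ⟨fun h => ?_, fun h => mem_image.2 ⟨_, h, by simp⟩⟩
  obtain ⟨e, he, rfl⟩ := mem_image.1 h
  simpa using he

lemma isEdge_rotate {i j : Fin (n + 3)} :
    IsEdge (T.rotate a) i j ↔ IsEdge T (-a + i) (-a + j) := by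
  simp [IsEdge, mem_rotate_diags, vadd_finset_insert, bdryAdj_add_left]

lemma isTriangle_rotate {t : Finset (Fin (n + 3))} :
    IsTriangle (T.rotate a) t ↔ IsTriangle T (-a +ᵥ t) := by
  refine ⟨fun h => ?_, fun h => ?_⟩
  · have := h.image (T' := T) (g := (-a +ᵥ ·)) fun i j => isEdge_rotate.symm
    rwa [image_vadd] at this
  · have := h.image (T' := T.rotate a) (g := (a +ᵥ ·)) fun i j => by simp [isEdge_rotate]
    rwa [image_vadd, vadd_neg_vadd] at this

lemma degree_rotate (T : Triangulation (n + 3)) (a x : Fin (n + 3)) :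
    degree (T.rotate a) (a + x) = degree T x :=
  Nat.card_congr <|
    (Equiv.subtypeEquiv (Equiv.addLeft a) fun y => by simp [isEdge_rotate]).symm

def ColouredTri.rotate (C : ColouredTri (n + 3) m) (a : Fin (n + 3)) :
    ColouredTri (n + 3) m where
  T := C.T.rotate a
  col t := C.col ⟨-a +ᵥ t.1, isTriangle_rotate.1 t.2⟩

lemma weight_rotate (C : ColouredTri (n + 3) 2) (a x : Fin (n + 3)) :
    weight (C.rotate a) (a + x) = weight C x := by
  let e : {t // IsTriangle C.T t} ≃ {t // IsTriangle (C.rotate a).T t} :=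
    Equiv.subtypeEquiv (AddAction.toPerm a) fun t => by
      simp [ColouredTri.rotate, isTriangle_rotate]
  rw [weight, ← finsum_comp_equiv e]
  refine finsum_congr fun t => ?_
  change (if a +ᵥ x ∈ a +ᵥ t.1 then signVal (C.col ⟨-a +ᵥ a +ᵥ t.1, _⟩) else 0) = _
  simp only [vadd_mem_vadd_finset_iff, neg_vadd_vadd]

lemma Compatible.rotate {C : ColouredTri (n + 3) 2} {col : Fin (n + 3) → Fin 4}
    (h : Compatible C col) (a : Fin (n + 3)) :
    Compatible (C.rotate a) fun i => col (-a + i) := by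
  refine ⟨fun i j hij => h.1 _ _ (isEdge_rotate.1 hij), fun p q x z h₁ h₂ hxz hpq => ?_⟩
  exact h.col_eq_iff (a := -a + p) (b := -a + q) _ _ (by simp [vadd_finset_insert])
    (by simp [vadd_finset_insert]) (by simpa using hxz)
    (by simpa [vadd_finset_insert] using mem_rotate_diags.1 hpq)

end Rotation
section Fan

variable {n k : ℕ} {T : Triangulation (n + 3)}

lemma neg_one_eq_last : (-1 : Fin (n + 3)) = Fin.last (n + 2) :=
  neg_eq_of_add_eq_zero_left (Fin.last_add_one _)

lemma isEdge_zero_one : IsEdge T 0 1 :=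
  ⟨by simp, Or.inl (bdryAdj_iff_eq_add_one.2 (Or.inl (zero_add 1).symm))⟩

lemma isEdge_zero_neg_one : IsEdge T 0 (-1) :=
  ⟨by simp, Or.inl (bdryAdj_iff_eq_add_one.2 (Or.inr (neg_add_cancel 1).symm))⟩

variable (hk : (T.neighborFinset 0).card = k + 1)

noncomputable def fanVertex : Fin (k + 1) ↪o Fin (n + 3) :=
  (T.neighborFinset 0).orderEmbOfFin hk

noncomputable def fanTriangle (i : Fin k) : Finset (Fin (n + 3)) :=
  {0, fanVertex hk i.castSucc, fanVertex hk i.succ}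

lemma isEdge_fanVertex (i : Fin (k + 1)) : IsEdge T 0 (fanVertex hk i) :=
  T.mem_neighborFinset.1 (orderEmbOfFin_mem _ hk i)

lemma fanVertex_pos (i : Fin (k + 1)) : 0 < fanVertex hk i :=
  Fin.pos_of_ne_zero (isEdge_fanVertex hk i).1.symm

lemma exists_fanVertex_eq {y : Fin (n + 3)} (hy : IsEdge T 0 y) : ∃ i, fanVertex hk i = y := by
  have : y ∈ Set.range (fanVertex hk) := by
    rw [fanVertex, range_orderEmbOfFin]
    exact mem_coe.2 (T.mem_neighborFinset.2 hy)
  exact this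

lemma fanVertex_zero : fanVertex hk 0 = 1 := by
  obtain ⟨j, hj⟩ := exists_fanVertex_eq hk isEdge_zero_one
  have hle : fanVertex hk 0 ≤ 1 := hj ▸ (fanVertex hk).monotone (Fin.zero_le j)
  have hpos := fanVertex_pos hk 0
  rw [Fin.le_def, Fin.val_one] at hle
  rw [Fin.lt_def, Fin.val_zero] at hpos
  exact Fin.ext (by rw [Fin.val_one]; omega)

lemma fanVertex_last : fanVertex hk (Fin.last k) = -1 := by
  obtain ⟨j, hj⟩ := exists_fanVertex_eq hk isEdge_zero_neg_one
  refine le_antisymm (neg_one_eq_last ▸ Fin.le_last _) ?_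
  exact hj ▸ (fanVertex hk).monotone (Fin.le_last j)

lemma isEdge_fanVertex_castSucc_succ (i : Fin k) :
    IsEdge T (fanVertex hk i.castSucc) (fanVertex hk i.succ) := by
  have hpq := (fanVertex hk).strictMono (Fin.castSucc_lt_succ (i := i))
  have hpos := fanVertex_pos hk i.castSucc
  obtain ⟨c, h0c, hcq, h0c', hcq'⟩ := (isEdge_fanVertex hk i.succ).exists_between (by
    rw [Fin.lt_def] at hpq hpos
    rw [Fin.val_zero] at hpos ⊢
    omega)
  obtain ⟨j, rfl⟩ := exists_fanVertex_eq hk h0c'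
  rcases lt_trichotomy j i.castSucc with hj | rfl | hj
  · exact absurd ⟨h0c, (fanVertex hk).strictMono hj, hpq⟩
      ((isEdge_fanVertex hk _).not_interlace hcq')
  · exact hcq'
  · have hj' := (fanVertex hk).lt_iff_lt.1 hcq
    rw [Fin.lt_def, Fin.val_castSucc] at hj
    rw [Fin.lt_def, Fin.val_succ] at hj'
    omega

lemma not_isEdge_fanVertex {i j : Fin (k + 1)} (hij : i.val + 1 < j.val) :
    ¬ IsEdge T (fanVertex hk i) (fanVertex hk j) := fun h => by
  let m : Fin (k + 1) := ⟨i.val + 1, by omega⟩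
  exact (isEdge_fanVertex hk m).not_interlace h ⟨fanVertex_pos hk i,
    (fanVertex hk).strictMono (Fin.lt_def.2 (Nat.lt_succ_self _)), (fanVertex hk).strictMono hij⟩

lemma isTriangle_fanTriangle (i : Fin k) : IsTriangle T (fanTriangle hk i) :=
  ⟨0, _, _, (isEdge_fanVertex hk _).1, (isEdge_fanVertex hk _).1,
    (isEdge_fanVertex_castSucc_succ hk i).1, rfl, isEdge_fanVertex hk _, isEdge_fanVertex hk _,
    isEdge_fanVertex_castSucc_succ hk i⟩

lemma fanTriangle_injective : Function.Injective (fanTriangle hk) := by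
  have mem : ∀ i j : Fin k, fanVertex hk i.succ ∈ fanTriangle hk j →
      i.succ = j.castSucc ∨ i.succ = j.succ := by
    intro i j h
    simpa [fanTriangle, (fanVertex_pos hk _).ne'] using h
  intro i j h
  have hij := mem i j (h ▸ by simp [fanTriangle])
  have hji := mem j i (h ▸ by simp [fanTriangle])
  simp only [Fin.ext_iff, Fin.val_succ, Fin.val_castSucc] at hij hji ⊢
  omega

lemma exists_fanTriangle_eq {t : Finset (Fin (n + 3))} (ht : IsTriangle T t) (h0 : 0 ∈ t) :
    ∃ i, fanTriangle hk i = t := by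
  obtain ⟨p, q, hp, hq, hpq, rfl⟩ := ht.exists_eq_insert h0
  obtain ⟨i, rfl⟩ := exists_fanVertex_eq hk hp
  obtain ⟨j, rfl⟩ := exists_fanVertex_eq hk hq
  clear ht h0
  wlog hij : i < j generalizing i j
  · rw [pair_comm]
    exact this j hq i hp hpq.symm
      ((Ne.symm fun h => hpq.1 (congrArg _ h)).lt_of_le (not_lt.1 hij))
  have hj : j.val = i.val + 1 := by
    by_contra hne
    exact not_isEdge_fanVertex hk (by rw [Fin.lt_def] at hij; omega) hpq
  refine ⟨⟨i.val, by omega⟩, ?_⟩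
  rw [fanTriangle, show Fin.castSucc ⟨i.val, _⟩ = i from rfl,
    show Fin.succ ⟨i.val, _⟩ = j from Fin.ext hj.symm]

lemma eq_zero_and_eq_last_of_col_eq {col : Fin (n + 3) → Fin 4}
    (honly : ∀ y z, y ≠ z → IsEdge T 0 y → IsEdge T 0 z → col y = col z →
      ({y, z} : Finset (Fin (n + 3))) = {-1, 1})
    {i j : Fin (k + 1)} (hij : i < j) (hc : col (fanVertex hk i) = col (fanVertex hk j)) :
    i = 0 ∧ j = Fin.last k := by
  have hpair := honly _ _ ((fanVertex hk).injective.ne hij.ne) (isEdge_fanVertex hk i)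
    (isEdge_fanVertex hk j) hc
  rw [← fanVertex_last hk, ← fanVertex_zero hk, pair_comm (fanVertex hk (Fin.last k))] at hpair
  obtain ⟨h₁, h₂⟩ := eq_and_eq_of_pair_eq_pair_of_lt hpair ((fanVertex hk).strictMono hij)
    ((fanVertex hk).strictMono ((Fin.zero_le i).trans_lt (hij.trans_le (Fin.le_last j))))
  exact ⟨(fanVertex hk).injective h₁, (fanVertex hk).injective h₂⟩

end Fan

section FanWeight

variable {n k : ℕ} {C : ColouredTri (n + 3) 2} (hk : (C.T.neighborFinset 0).card = k + 1)

lemma weight_zero_eq_sum_fanTriangle :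
    weight C 0 = ∑ i, signVal (C.col ⟨fanTriangle hk i, isTriangle_fanTriangle hk i⟩) := by
  classical
  rw [weight, finsum_eq_sum_of_fintype, ← sum_filter]
  symm
  refine sum_bij (fun i _ => ⟨fanTriangle hk i, isTriangle_fanTriangle hk i⟩)
    (fun i _ => by simp [fanTriangle])
    (fun i _ j _ h => fanTriangle_injective hk (congrArg Subtype.val h)) (fun t ht => ?_)
    (fun _ _ => rfl)
  obtain ⟨i, hi⟩ := exists_fanTriangle_eq hk t.2 (mem_filter.1 ht).2
  exact ⟨i, mem_univ _, Subtype.ext hi⟩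

/-- Consecutive fan triangles share the diagonal from `0` to their common vertex. -/
lemma Compatible.col_fanVertex_eq_iff {col : Fin (n + 3) → Fin 4} (h : Compatible C col)
    {i j : Fin k} (hij : j.val = i.val + 1) :
    col (fanVertex hk i.castSucc) = col (fanVertex hk j.succ) ↔
      C.col ⟨fanTriangle hk i, isTriangle_fanTriangle hk i⟩ ≠
        C.col ⟨fanTriangle hk j, isTriangle_fanTriangle hk j⟩ := by
  have hsucc : i.succ = j.castSucc := Fin.ext (by simp [hij])
  have hlt₁ := (fanVertex hk).strictMono (Fin.castSucc_lt_succ (i := i))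
  have hlt₂ := (fanVertex hk).strictMono (Fin.castSucc_lt_succ (i := j))
  have hpos := fanVertex_pos hk i.castSucc
  have hmax := (fanVertex hk j.succ).isLt
  rw [← hsucc] at hlt₂
  have hdiag : ({0, fanVertex hk i.succ} : Finset (Fin (n + 3))) ∈ C.T.diags := by
    refine (isEdge_fanVertex hk i.succ).2.resolve_left fun hb => ?_
    rw [bdryAdj_iff_val] at hb
    rw [Fin.lt_def] at hlt₁ hlt₂ hpos
    simp only [Fin.val_zero] at hb hpos
    omega
  refine h.col_eq_iff (a := 0) (b := fanVertex hk i.succ) _ _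
    (congrArg (insert 0) (pair_comm _ _)) (by rw [hsucc]; rfl) ((fanVertex hk).injective.ne ?_)
    hdiag
  simp only [ne_eq, Fin.ext_iff, Fin.val_castSucc, Fin.val_succ, hij]
  omega

end FanWeight

theorem degree_and_weight_at_zero {n : ℕ} (C : ColouredTri (n + 3) 2)
    (col : Fin (n + 3) → Fin 4)
    (hcomp : Compatible C col) (hbd : col (-1) = col 1)
    (honly : ∀ y z, y ≠ z → IsEdge C.T 0 y → IsEdge C.T 0 z → col y = col z →
      ({y, z} : Finset (Fin (n + 3))) = {-1, 1}) :
    (degree C.T 0 = 3 ∨ degree C.T 0 = 4) ∧ weight C 0 = 0 := by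
  obtain ⟨k, hk⟩ : ∃ k, (C.T.neighborFinset 0).card = k + 1 :=
    Nat.exists_eq_add_one.2 (card_pos.2 ⟨1, C.T.mem_neighborFinset.2 isEdge_zero_one⟩)
  have hle : k + 1 ≤ 4 := hk ▸ card_neighborFinset_le_four hcomp.1 honly
  have hs0 := fanVertex_zero hk
  have hslast := fanVertex_last hk
  rw [degree_eq_card_neighborFinset, hk, weight_zero_eq_sum_fanTriangle hk]
  rcases (by omega : k = 0 ∨ k = 1 ∨ k = 2 ∨ k = 3) with rfl | rfl | rfl | rfl
  · have := hs0.symm.trans hslast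
    simp [neg_one_eq_last, Fin.ext_iff] at this
  · have hedge := isEdge_fanVertex_castSucc_succ hk 0
    rw [show Fin.succ (0 : Fin 1) = Fin.last 1 from rfl, Fin.castSucc_zero, hs0, hslast] at hedge
    exact (hcomp.1 _ _ hedge hbd.symm).elim
  · refine ⟨Or.inl rfl, ?_⟩
    rw [Fin.sum_univ_two]
    refine signVal_add_signVal_of_ne ((hcomp.col_fanVertex_eq_iff hk (i := 0) (j := 1) rfl).1 ?_)
    rw [show Fin.succ (1 : Fin 2) = Fin.last 2 from rfl, Fin.castSucc_zero, hs0, hslast]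
    exact hbd.symm
  · refine ⟨Or.inr rfl, ?_⟩
    rw [Fin.sum_univ_three]
    have h₀₁ := not_not.1 fun hne => absurd (eq_zero_and_eq_last_of_col_eq hk honly (by decide)
      ((hcomp.col_fanVertex_eq_iff hk (i := 0) (j := 1) rfl).2 hne)).2 (by decide)
    have h₁₂ := not_not.1 fun hne => absurd (eq_zero_and_eq_last_of_col_eq hk honly (by decide)
      ((hcomp.col_fanVertex_eq_iff hk (i := 1) (j := 2) rfl).2 hne)).1 (by decide)
    rw [h₀₁, h₁₂]
    exact signVal_add_signVal_add_signVal _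

/-- If the only two neighbours of `x` with equal colour (in the 4-colouring
associated to the signed triangulation) are its two neighbours along the boundary,
then `x` has degree 3 or 4 and its weight is `0`. -/
theorem degree_and_weight_of_boundary_same_colour (n : ℕ)
    (C : ColouredTri (n + 3) 2) (col : Fin (n + 3) → Fin 4)
    (hcomp : Compatible C col) (x : Fin (n + 3))
    (hbd : col (x - 1) = col (x + 1))
    (honly : ∀ y z : Fin (n + 3), y ≠ z → IsEdge C.T x y → IsEdge C.T x z →
      col y = col z → ({y, z} : Finset (Fin (n + 3))) = {x - 1, x + 1}) :
    (degree C.T x = 3 ∨ degree C.T x = 4) ∧ weight C x = 0 := by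
  have hdeg := degree_rotate C.T (-x) x
  have hweight := weight_rotate C (-x) x
  rw [neg_add_cancel] at hdeg hweight
  rw [← hdeg, ← hweight]
  refine degree_and_weight_at_zero (C.rotate (-x)) (fun i => col (x + i)) ?_ ?_ ?_
  · simpa using hcomp.rotate (-x)
  · simpa [sub_eq_add_neg] using hbd
  · intro y z hyz hy hz hc
    have hpair := honly _ _ (by simpa using hyz) (by simpa using isEdge_rotate.1 hy)
      (by simpa using isEdge_rotate.1 hz) hc
    simpa [sub_eq_add_neg, vadd_finset_insert] using congrArg (-x +ᵥ ·) hpair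

end PolyFlip
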